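/- Let H be a real Hilbert space and let A, B : H ⇉ H be maximally α-comonotone and maximally β-comonotone, respectively, with α + β ≥ 0 and zer(A + B) ≠ ∅. Let γ, δ > 0, λ = 1 + δ/γ, μ = 1 + γ/δ, and suppose that γ + δ ≤ min{2(γ + α), 2(δ + β)}. Let κ ∈ (0, κ̄), where κ̄ := 1 if α + β = 0 and κ̄ := (4(γ + α)(δ + β) − (γ + δ)²)/(2(γ + δ)(α + β)) if α + β > 0. Define J₁ := (Id + γA)^{-1}, J₂ := (Id + δB)^{-1}, R₁ := (1 − λ)Id + λJ₁, R₂ := (1 − μ)Id + μJ₂, T_aDR := (1 − κ)Id + κR₂R₁ (these are single-valued with full domain under the stated hypotheses). Let x₀ ∈ H and x_{k+1} = T_aDR(x_k) for k = 0, 1, 2, …. Then the sequence (x_k) converges weakly to some x⋆ ∈ Fix T_aDR, and the shadow sequence (J₁(x_k)) converges weakly to J₁(x⋆), which belongs to zer(A + B). -/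

import Mathlib

/-!
Write `Y₁ = γ⁻¹(Id - J₁)` and `Y₂ = δ⁻¹(Id - J₂)` for the Yosida approximations. Then
`Id - T_aDR = κ(γ+δ) G` with `G z = Y₁ z + Y₂ (z - (γ+δ) Y₁ z)`, and zeros of `G` correspond to
zeros of `A + B` through `J₁`. Comonotonicity makes `Y₁`, `Y₂` cocoercive with constants `γ + α`,
`δ + β`, and a quadratic-form estimate then makes `G` `θ`-cocoercive for some `θ > κ(γ+δ)/2`: this
is where the bound `κ < κ̄` enters. The iteration is therefore a Krasnosel'skiĭ–Mann scheme for
`G`: it is Fejér monotone with respect to `zer G`, `G xₖ → 0`, and demiclosedness together with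
Opial's lemma gives `xₖ ⇀ x⋆` with `G x⋆ = 0`.

For the shadow sequence, `uₖ = Y₁ xₖ ∈ A (J₁ xₖ)` and `vₖ = Y₂ wₖ ∈ B (J₂ wₖ)` satisfy
`uₖ + vₖ = G xₖ → 0` and `J₂ wₖ - J₁ xₖ = -δ G xₖ → 0`. In the sum of the two comonotonicity
inequalities against fixed graph points, the only term that does not pass to weak limits is
`-(α+β)‖uₖ‖²`, which has the right sign since `α + β ≥ 0`. Along a subsequence with
`J₁ xₖ ⇀ p̄`, maximality of `A` then yields `γ⁻¹(x⋆ - p̄) ∈ A p̄`, i.e. `p̄ = J₁ x⋆`.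
-/

open Filter Topology
open scoped InnerProductSpace Pointwise

section

variable {H : Type*} [NormedAddCommGroup H] [InnerProductSpace ℝ H]

def WeakTendsto (x : ℕ → H) (a : H) : Prop :=
  ∀ u, Tendsto (fun k => ⟪x k, u⟫_ℝ) atTop (𝓝 ⟪a, u⟫_ℝ)

namespace WeakTendsto

variable {x y : ℕ → H} {a b : H}

theorem of_tendsto (h : Tendsto x atTop (𝓝 a)) : WeakTendsto x a :=
  fun _ => h.inner tendsto_const_nhds

theorem const (a : H) : WeakTendsto (fun _ => a) a :=
  of_tendsto tendsto_const_nhds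

theorem sub (hx : WeakTendsto x a) (hy : WeakTendsto y b) :
    WeakTendsto (fun k => x k - y k) (a - b) := fun u => by
  simpa only [inner_sub_left] using (hx u).sub (hy u)

theorem const_smul (hx : WeakTendsto x a) (c : ℝ) :
    WeakTendsto (fun k => c • x k) (c • a) := fun u => by
  simpa only [real_inner_smul_left] using (hx u).const_mul c

theorem comp (hx : WeakTendsto x a) {ns : ℕ → ℕ} (hns : Tendsto ns atTop atTop) :
    WeakTendsto (x ∘ ns) a := fun u => (hx u).comp hns

theorem tendsto_inner_sub (hx : WeakTendsto x a) (u : H) :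
    Tendsto (fun k => ⟪x k - a, u⟫_ℝ) atTop (𝓝 0) := by
  simpa only [inner_sub_left, sub_self] using (hx u).sub_const ⟪a, u⟫_ℝ

end WeakTendsto

theorem inner_quadratic_nonneg {P Q K : ℝ} (hP : 0 ≤ P) (hQ : 0 ≤ Q) (hK : K ^ 2 ≤ 4 * P * Q)
    (a b : H) : 0 ≤ P * ‖a‖ ^ 2 + Q * ‖b‖ ^ 2 + K * ⟪a, b⟫_ℝ := by
  have hab := abs_real_inner_le_norm a b
  have hsq : (|K| * (‖a‖ * ‖b‖)) ^ 2 ≤ (P * ‖a‖ ^ 2 + Q * ‖b‖ ^ 2) ^ 2 := by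
    rw [mul_pow, sq_abs]
    nlinarith [sq_nonneg (P * ‖a‖ ^ 2 - Q * ‖b‖ ^ 2), sq_nonneg (‖a‖ * ‖b‖)]
  have h₁ := (pow_le_pow_iff_left₀ (by positivity) (by positivity) two_ne_zero).1 hsq
  have h₂ : -(|K| * (‖a‖ * ‖b‖)) ≤ K * ⟪a, b⟫_ℝ := by
    have := neg_abs_le (K * ⟪a, b⟫_ℝ)
    rw [abs_mul] at this
    nlinarith [abs_nonneg K]
  linarith

def Cocoercive (G : H → H) (θ : ℝ) : Prop :=
  ∀ z w, θ * ‖G z - G w‖ ^ 2 ≤ ⟪z - w, G z - G w⟫_ℝ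

namespace Cocoercive

variable {G : H → H} {θ : ℝ}

theorem mul_norm_sub_le (hG : Cocoercive G θ) (z w : H) : θ * ‖G z - G w‖ ≤ ‖z - w‖ := by
  have h := (hG z w).trans (real_inner_le_norm _ _)
  rcases (norm_nonneg (G z - G w)).eq_or_lt with h0 | h0
  · rw [← h0, mul_zero]
    exact norm_nonneg _
  · exact le_of_mul_le_mul_right (by linarith) h0

theorem exists_norm_comp_le (hG : Cocoercive G θ) (hθ : 0 < θ) {x : ℕ → H} {C : ℝ}
    (hC : ∀ k, ‖x k‖ ≤ C) : ∃ C', ∀ k, ‖G (x k)‖ ≤ C' := by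
  refine ⟨‖G 0‖ + C / θ, fun k => ?_⟩
  have h := hG.mul_norm_sub_le (x k) 0
  rw [sub_zero] at h
  have h' : ‖G (x k) - G 0‖ ≤ C / θ := by rw [le_div_iff₀ hθ]; linarith [hC k]
  linarith [norm_le_norm_sub_add (G (x k)) (G 0)]

theorem add_comp_sub_smul {F₁ F₂ : H → H} {ρ₁ ρ₂ s : ℝ} (h₁ : Cocoercive F₁ ρ₁)
    (h₂ : Cocoercive F₂ ρ₂) (hθ₁ : θ ≤ ρ₁) (hθ₂ : θ ≤ ρ₂)
    (hθ : (s - 2 * θ) ^ 2 ≤ 4 * (ρ₁ - θ) * (ρ₂ - θ)) :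
    Cocoercive (fun z => F₁ z + F₂ (z - s • F₁ z)) θ := by
  intro z w
  have ha := h₁ z w
  have hb := h₂ (z - s • F₁ z) (w - s • F₁ w)
  have hzw : z - s • F₁ z - (w - s • F₁ w) = (z - w) - s • (F₁ z - F₁ w) := by module
  rw [hzw, inner_sub_left, real_inner_smul_left] at hb
  have hq := inner_quadratic_nonneg (K := s - 2 * θ) (sub_nonneg.2 hθ₁) (sub_nonneg.2 hθ₂)
    (by linarith) (F₁ z - F₁ w) (F₂ (z - s • F₁ z) - F₂ (w - s • F₁ w))
  dsimp only
  rw [add_sub_add_comm, norm_add_sq_real, inner_add_right]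
  linarith

theorem norm_sub_sq_add_le (hG : Cocoercive G θ) {η : ℝ} (hη : 0 ≤ η) {x z : H}
    (hz : G z = 0) :
    ‖x - η • G x - z‖ ^ 2 + η * (2 * θ - η) * ‖G x‖ ^ 2 ≤ ‖x - z‖ ^ 2 := by
  have h := hG x z
  rw [hz, sub_zero] at h
  rw [sub_right_comm, norm_sub_sq_real, real_inner_smul_right, norm_smul,
    Real.norm_of_nonneg hη, mul_pow]
  nlinarith

end Cocoercive

def IsComonotone (A : H → Set H) (α : ℝ) : Prop :=
  ∀ x u y v, u ∈ A x → v ∈ A y → ⟪x - y, u - v⟫_ℝ ≥ α * ‖u - v‖ ^ 2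

def IsMaxComonotone (A : H → Set H) (α : ℝ) : Prop :=
  IsComonotone A α ∧ ∀ A' : H → Set H, IsComonotone A' α → (∀ x, A x ⊆ A' x) → ∀ x, A' x = A x

/-- `J` is a single-valued selection of the resolvent `(Id + γA)⁻¹`. -/
def IsResolvent (J : H → H) (A : H → Set H) (γ : ℝ) : Prop :=
  ∀ z, z - J z ∈ γ • A (J z)

/-- The Yosida approximation of `A` when `J` is the resolvent of `γA`. -/
noncomputable def yosida (J : H → H) (γ : ℝ) (z : H) : H :=
  γ⁻¹ • (z - J z)

def comonotoneGap (α : ℝ) (x u y v : H) : ℝ :=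
  ⟪x - y, u - v⟫_ℝ - α * ‖u - v‖ ^ 2

variable {A B : H → Set H} {α β γ δ : ℝ} {J J₁ J₂ : H → H}

theorem IsMaxComonotone.mem_of_forall (hA : IsMaxComonotone A α) {p u : H}
    (h : ∀ y a, a ∈ A y → ⟪p - y, u - a⟫_ℝ ≥ α * ‖u - a‖ ^ 2) : u ∈ A p := by
  let A' : H → Set H := fun z => {w | w ∈ A z ∨ (z = p ∧ w = u)}
  have hA' : IsComonotone A' α := by
    rintro x w y v (hw | ⟨rfl, rfl⟩) (hv | ⟨rfl, rfl⟩)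
    · exact hA.1 _ _ _ _ hw hv
    · rw [← neg_sub y x, ← neg_sub v w, inner_neg_neg, norm_neg]
      exact h _ _ hw
    · exact h _ _ hv
    · simp
  rw [← hA.2 A' hA' (fun z w hw => Or.inl hw) p]
  exact Or.inr ⟨rfl, rfl⟩

theorem IsComonotone.add_mul_norm_sq_le_inner (hA : IsComonotone A α) (γ : ℝ) {p q u v : H}
    (hu : u ∈ A p) (hv : v ∈ A q) :
    (γ + α) * ‖u - v‖ ^ 2 ≤ ⟪(p + γ • u) - (q + γ • v), u - v⟫_ℝ := by
  have h := hA _ _ _ _ hu hv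
  rw [show (p + γ • u) - (q + γ • v) = (p - q) + γ • (u - v) by module, inner_add_left,
    real_inner_smul_left, real_inner_self_eq_norm_sq]
  linarith

theorem add_smul_yosida (J : H → H) (hγ : γ ≠ 0) (z : H) : J z + γ • yosida J γ z = z := by
  rw [yosida, smul_inv_smul₀ hγ, add_sub_cancel]

theorem sub_smul_yosida (J : H → H) (hγ : γ ≠ 0) (z : H) : z - γ • yosida J γ z = J z := by
  rw [yosida, smul_inv_smul₀ hγ, sub_sub_cancel]

namespace IsResolvent

theorem exists_mem (hJ : IsResolvent J A γ) (z : H) : ∃ u ∈ A (J z), J z + γ • u = z := by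
  obtain ⟨u, hu, h⟩ := Set.mem_smul_set.mp (hJ z)
  exact ⟨u, hu, by rw [h, add_sub_cancel]⟩

theorem yosida_mem (hJ : IsResolvent J A γ) (hγ : γ ≠ 0) (z : H) : yosida J γ z ∈ A (J z) := by
  obtain ⟨u, hu, h⟩ := Set.mem_smul_set.mp (hJ z)
  rwa [yosida, ← h, inv_smul_smul₀ hγ]

theorem apply_add_smul (hJ : IsResolvent J A γ) (hA : IsComonotone A α) (hγα : 0 < γ + α)
    {p u : H} (hu : u ∈ A p) : J (p + γ • u) = p := by
  obtain ⟨v, hv, hz⟩ := hJ.exists_mem (p + γ • u)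
  have h := hA.add_mul_norm_sq_le_inner γ hv hu
  rw [hz, sub_self, inner_zero_left] at h
  have hvu : v = u := by simpa [sub_eq_zero] using nonpos_of_mul_nonpos_right h hγα
  rw [hvu] at hz
  exact add_right_cancel hz

theorem cocoercive_yosida (hJ : IsResolvent J A γ) (hA : IsComonotone A α) (hγ : γ ≠ 0) :
    Cocoercive (yosida J γ) (γ + α) := fun z w => by
  simpa only [add_smul_yosida J hγ] using
    hA.add_mul_norm_sq_le_inner γ (hJ.yosida_mem hγ z) (hJ.yosida_mem hγ w)

end IsResolvent

/-- One-sided maximality test: pairing the test point `(y, a) ∈ gra A` with the point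
`(J w, (w - J w)/δ) ∈ gra B`, `w = p - δu`, kills the `B`-gap. -/
theorem IsMaxComonotone.mem_of_gap_add_gap_nonneg (hA : IsMaxComonotone A α)
    (hJ : IsResolvent J B δ) (hδβ : 0 < δ + β) {p u : H}
    (h : ∀ y a y' b, a ∈ A y → b ∈ B y' →
      0 ≤ comonotoneGap α p u y a + comonotoneGap β p (-u) y' b) :
    u ∈ A p := by
  refine hA.mem_of_forall fun y a ha => ?_
  obtain ⟨b, hb, hJb⟩ := hJ.exists_mem (p - δ • u)
  have hgap : comonotoneGap β p (-u) (J (p - δ • u)) b = -((δ + β) * ‖u + b‖ ^ 2) := by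
    rw [comonotoneGap, eq_sub_of_add_eq hJb, show -u - b = -(u + b) by abel,
      show p - (p - δ • u - δ • b) = δ • (u + b) by module, inner_neg_right,
      real_inner_smul_left, real_inner_self_eq_norm_sq, norm_neg]
    ring
  have h₁ := h y a _ b ha hb
  rw [hgap] at h₁
  have h₂ : 0 ≤ (δ + β) * ‖u + b‖ ^ 2 := by positivity
  simp only [comonotoneGap] at h₁
  linarith

/-- The right-hand side is the limiting gap, two terms affine in `(p, u)`, and three terms with a
factor `q - p` or `u + v`. -/
theorem comonotoneGap_add_eq (α β : ℝ) (p u q v p' u' y a y' b : H) :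
    comonotoneGap α p u y a + comonotoneGap β q v y' b + (α + β) * ‖u - u'‖ ^ 2 =
      comonotoneGap α p' u' y a + comonotoneGap β p' (-u') y' b
      + ⟪p - p', -(a + b)⟫_ℝ
      + ⟪u - u', y' - y + (2 * α) • a - (2 * β) • b - (2 * (α + β)) • u'⟫_ℝ
      + ⟪v - b, q - p⟫_ℝ + ⟪p - y', u + v⟫_ℝ - β * ⟪v - u - (2 : ℝ) • b, u + v⟫_ℝ := by
  simp only [comonotoneGap, ← real_inner_self_eq_norm_sq, inner_add_right, inner_sub_left,
    inner_sub_right, inner_neg_left, inner_neg_right, real_inner_smul_right, real_inner_comm]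
  ring

theorem exists_cocoercivity_constant {α β γ δ κ : ℝ} (hγδ : 0 < γ + δ) (hαβ : 0 ≤ α + β)
    (hcond₁ : γ + δ ≤ 2 * (γ + α)) (hcond₂ : γ + δ ≤ 2 * (δ + β)) (hκ1 : α + β = 0 → κ < 1)
    (hκ2 : 0 < α + β →
      κ < (4 * (γ + α) * (δ + β) - (γ + δ) ^ 2) / (2 * (γ + δ) * (α + β))) :
    ∃ θ, κ * (γ + δ) < 2 * θ ∧ θ ≤ γ + α ∧ θ ≤ δ + β ∧
      (γ + δ - 2 * θ) ^ 2 ≤ 4 * (γ + α - θ) * (δ + β - θ) := by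
  rcases hαβ.eq_or_lt with h | h
  · refine ⟨(γ + δ) / 2, by nlinarith [hκ1 h.symm], by linarith, by linarith, ?_⟩
    have : 0 ≤ (γ + α - (γ + δ) / 2) * (δ + β - (γ + δ) / 2) :=
      mul_nonneg (by linarith) (by linarith)
    nlinarith
  · -- the largest admissible constant: the last condition reads `4(α+β)θ ≤ 4(γ+α)(δ+β) - (γ+δ)²`
    set θ := (4 * (γ + α) * (δ + β) - (γ + δ) ^ 2) / (4 * (α + β))
    have hθ : 4 * (α + β) * θ = 4 * (γ + α) * (δ + β) - (γ + δ) ^ 2 :=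
      mul_div_cancel₀ _ (by positivity)
    have hκ := hκ2 h
    rw [lt_div_iff₀ (by positivity)] at hκ
    refine ⟨θ, by nlinarith, ?_, ?_, by nlinarith⟩
    · nlinarith [sq_nonneg (2 * (γ + α) - (γ + δ))]
    · nlinarith [sq_nonneg (2 * (δ + β) - (γ + δ))]

/-- `T_aDR = Id - κ(γ + δ) • aDRResidual J₁ J₂ γ δ` (see `relaxed_resolvent_eq`). -/
noncomputable def aDRResidual (J₁ J₂ : H → H) (γ δ : ℝ) (z : H) : H :=
  yosida J₁ γ z + yosida J₂ δ (z - (γ + δ) • yosida J₁ γ z)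

theorem relaxed_resolvent_eq (J : H → H) (hγ : γ ≠ 0) (z : H) :
    (1 - (1 + δ / γ)) • z + (1 + δ / γ) • J z = z - (γ + δ) • yosida J γ z := by
  rw [yosida, smul_smul, show (γ + δ) * γ⁻¹ = 1 + δ / γ by field_simp]
  module

theorem cocoercive_aDRResidual (hA : IsComonotone A α) (hB : IsComonotone B β)
    (hJ₁ : IsResolvent J₁ A γ) (hJ₂ : IsResolvent J₂ B δ) (hγ : γ ≠ 0) (hδ : δ ≠ 0) {θ : ℝ}
    (hθα : θ ≤ γ + α) (hθβ : θ ≤ δ + β)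
    (hθ : (γ + δ - 2 * θ) ^ 2 ≤ 4 * (γ + α - θ) * (δ + β - θ)) :
    Cocoercive (aDRResidual J₁ J₂ γ δ) θ :=
  (hJ₁.cocoercive_yosida hA hγ).add_comp_sub_smul (hJ₂.cocoercive_yosida hB hδ) hθα hθβ hθ

theorem exists_aDRResidual_eq_zero (hA : IsComonotone A α) (hB : IsComonotone B β)
    (hJ₁ : IsResolvent J₁ A γ) (hJ₂ : IsResolvent J₂ B δ) (hγ : γ ≠ 0) (hδ : δ ≠ 0)
    (hγα : 0 < γ + α) (hδβ : 0 < δ + β) (h : ∃ w, (0 : H) ∈ A w + B w) :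
    ∃ z, aDRResidual J₁ J₂ γ δ z = 0 := by
  obtain ⟨w, a, ha, b, hb, hab⟩ := h
  obtain rfl : b = -a := eq_neg_of_add_eq_zero_right hab
  have hY₁ : yosida J₁ γ (w + γ • a) = a := by
    rw [yosida, hJ₁.apply_add_smul hA hγα ha, add_sub_cancel_left, inv_smul_smul₀ hγ]
  have hY₂ : yosida J₂ δ (w + δ • -a) = -a := by
    rw [yosida, hJ₂.apply_add_smul hB hδβ hb, add_sub_cancel_left, inv_smul_smul₀ hδ]
  refine ⟨w + γ • a, ?_⟩
  rw [aDRResidual, hY₁, show w + γ • a - (γ + δ) • a = w + δ • -a by module, hY₂,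
    add_neg_cancel]

theorem mem_add_of_aDRResidual_eq_zero (hJ₁ : IsResolvent J₁ A γ) (hJ₂ : IsResolvent J₂ B δ)
    (hγ : γ ≠ 0) (hδ : δ ≠ 0) {z : H} (h : aDRResidual J₁ J₂ γ δ z = 0) :
    (0 : H) ∈ A (J₁ z) + B (J₁ z) := by
  set w := z - (γ + δ) • yosida J₁ γ z
  have hv : yosida J₂ δ w = -yosida J₁ γ z := eq_neg_of_add_eq_zero_right h
  have hJ : J₂ w = J₁ z := by
    rw [← sub_smul_yosida J₂ hδ, ← sub_smul_yosida J₁ hγ, hv]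
    module
  refine ⟨_, hJ₁.yosida_mem hγ z, _, ?_, add_neg_cancel _⟩
  rw [← hv, ← hJ]
  exact hJ₂.yosida_mem hδ w

section Complete

variable [CompleteSpace H]

namespace WeakTendsto

variable {x y : ℕ → H} {a b : H}

theorem exists_norm_le (hx : WeakTendsto x a) : ∃ C, ∀ k, ‖x k‖ ≤ C := by
  obtain ⟨C, hC⟩ := banach_steinhaus (g := fun k => InnerProductSpace.toDual ℝ H (x k))
    fun u => by
      obtain ⟨C, hC⟩ := (hx u).norm.bddAbove_range
      exact ⟨C, fun k => hC ⟨k, rfl⟩⟩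
  exact ⟨C, fun k => by simpa using hC k⟩

theorem tendsto_inner_of_tendsto_zero (hx : WeakTendsto x a) (hy : Tendsto y atTop (𝓝 0)) :
    Tendsto (fun k => ⟪x k, y k⟫_ℝ) atTop (𝓝 0) := by
  obtain ⟨C, hC⟩ := hx.exists_norm_le
  refine squeeze_zero_norm (fun k => (norm_inner_le_norm _ _).trans
    (mul_le_mul_of_nonneg_right (hC k) (norm_nonneg _))) ?_
  simpa using (tendsto_zero_iff_norm_tendsto_zero.1 hy).const_mul C

end WeakTendsto

/-- Sequential Banach–Alaoglu in a Hilbert space, obtained from the separable case by working in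
the closed span of the sequence. -/
theorem exists_weakTendsto_subseq {x : ℕ → H} {M : ℝ} (hM : ∀ k, ‖x k‖ ≤ M) :
    ∃ φ : ℕ → ℕ, StrictMono φ ∧ ∃ a, WeakTendsto (x ∘ φ) a := by
  set K := (Submodule.span ℝ (Set.range x)).topologicalClosure
  have hxK (k : ℕ) : x k ∈ K :=
    Submodule.le_topologicalClosure _ (Submodule.subset_span ⟨k, rfl⟩)
  have : TopologicalSpace.SeparableSpace K := by
    have hsep := ((Set.countable_range x).isSeparable.span (R := ℝ)).closure
    rw [← Submodule.topologicalClosure_coe] at hsep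
    exact hsep.separableSpace
  set f : ℕ → WeakDual ℝ K := fun k =>
    StrongDual.toWeakDual (InnerProductSpace.toDual ℝ K ⟨x k, hxK k⟩)
  obtain ⟨g, -, φ, hφ, hfg⟩ :=
    WeakDual.isSeqCompact_closedBall ℝ K 0 M (x := f) fun k => by simpa [f] using hM k
  refine ⟨φ, hφ, (InnerProductSpace.toDual ℝ K).symm (WeakDual.toStrongDual g), fun u => ?_⟩
  have hlim := ((WeakDual.eval_continuous (K.orthogonalProjectionOnto u)).tendsto g).comp hfg
  rw [← Submodule.inner_orthogonalProjectionOnto_eq_of_mem_left,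
    InnerProductSpace.toDual_symm_apply]
  simpa [f, Function.comp_def] using hlim

theorem WeakTendsto.of_forall_subseq {x : ℕ → H} {a : H} {M : ℝ} (hM : ∀ k, ‖x k‖ ≤ M)
    (h : ∀ ns : ℕ → ℕ, Tendsto ns atTop atTop → ∀ b, WeakTendsto (x ∘ ns) b → b = a) :
    WeakTendsto x a := fun u =>
  tendsto_of_subseq_tendsto fun ns hns => by
    obtain ⟨φ, hφ, b, hb⟩ := exists_weakTendsto_subseq fun k => hM (ns k)
    obtain rfl := h (ns ∘ φ) (hns.comp hφ.tendsto_atTop) b hb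
    exact ⟨φ, hb u⟩

/-- Opial's lemma. -/
theorem exists_weakTendsto_of_tendsto_norm_sub {x : ℕ → H} {F : Set H} (hF : F.Nonempty)
    (hnorm : ∀ z ∈ F, ∃ l, Tendsto (fun k => ‖x k - z‖) atTop (𝓝 l))
    (hclus : ∀ ns : ℕ → ℕ, Tendsto ns atTop atTop → ∀ b, WeakTendsto (x ∘ ns) b → b ∈ F) :
    ∃ a ∈ F, WeakTendsto x a := by
  obtain ⟨z, hz⟩ := hF
  obtain ⟨l, hl⟩ := hnorm z hz
  obtain ⟨C, hC⟩ := hl.bddAbove_range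
  have hM (k : ℕ) : ‖x k‖ ≤ C + ‖z‖ := by
    have := hC ⟨k, rfl⟩
    calc ‖x k‖ = ‖(x k - z) + z‖ := by rw [sub_add_cancel]
      _ ≤ C + ‖z‖ := (norm_add_le _ _).trans (by gcongr)
  obtain ⟨φ, hφ, a, ha⟩ := exists_weakTendsto_subseq hM
  have haF := hclus φ hφ.tendsto_atTop a ha
  refine ⟨a, haF, WeakTendsto.of_forall_subseq hM fun ns hns b hb => ?_⟩
  obtain ⟨la, hla⟩ := hnorm a haF
  obtain ⟨lb, hlb⟩ := hnorm b (hclus ns hns b hb)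
  -- `⟪x k, a - b⟫` is a combination of `‖x k - a‖²` and `‖x k - b‖²`, hence converges
  have hid (k : ℕ) :
      ⟪x k, a - b⟫_ℝ = (‖x k - b‖ ^ 2 - ‖x k - a‖ ^ 2 + ‖a‖ ^ 2 - ‖b‖ ^ 2) / 2 := by
    rw [norm_sub_sq_real, norm_sub_sq_real, inner_sub_right]
    ring
  have hlim : Tendsto (fun k => ⟪x k, a - b⟫_ℝ) atTop
      (𝓝 ((lb ^ 2 - la ^ 2 + ‖a‖ ^ 2 - ‖b‖ ^ 2) / 2)) := by
    simp_rw [hid]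
    exact ((((hlb.pow 2).sub (hla.pow 2)).add_const _).sub_const _).div_const 2
  have h₁ := tendsto_nhds_unique (ha (a - b)) (hlim.comp hφ.tendsto_atTop)
  have h₂ := tendsto_nhds_unique (hb (a - b)) (hlim.comp hns)
  have hab : ⟪a - b, a - b⟫_ℝ = 0 := by rw [inner_sub_left, h₁, h₂, sub_self]
  exact (sub_eq_zero.1 (inner_self_eq_zero.1 hab)).symm

namespace Cocoercive

variable {G : H → H} {θ : ℝ}

theorem eq_zero_of_weakTendsto (hG : Cocoercive G θ) (hθ : 0 < θ) {x : ℕ → H} {q : H}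
    (hx : WeakTendsto x q) (hGx : Tendsto (fun k => G (x k)) atTop (𝓝 0)) : G q = 0 := by
  have hL : Tendsto (fun k => θ * ‖G (x k) - G q‖ ^ 2) atTop (𝓝 (θ * ‖G q‖ ^ 2)) := by
    simpa using (((hGx.sub_const (G q)).norm).pow 2).const_mul θ
  have hR : Tendsto (fun k => ⟪x k - q, G (x k)⟫_ℝ - ⟪x k - q, G q⟫_ℝ) atTop (𝓝 0) := by
    simpa using ((hx.sub (.const q)).tendsto_inner_of_tendsto_zero
      hGx).sub (hx.tendsto_inner_sub (G q))
  have hle : θ * ‖G q‖ ^ 2 ≤ 0 :=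
    le_of_tendsto_of_tendsto' hL hR fun k => by rw [← inner_sub_right]; exact hG _ _
  have : ‖G q‖ ^ 2 ≤ 0 := nonpos_of_mul_nonpos_right hle hθ
  simpa using this

theorem exists_weakTendsto_zero (hG : Cocoercive G θ) {η : ℝ} (hη : 0 < η) (hηθ : η < 2 * θ)
    {x : ℕ → H} (hx : ∀ k, x (k + 1) = x k - η • G (x k)) (hzer : ∃ z, G z = 0) :
    ∃ a, G a = 0 ∧ WeakTendsto x a ∧ Tendsto (fun k => G (x k)) atTop (𝓝 0) := by
  have hρ : 0 < η * (2 * θ - η) := mul_pos hη (by linarith)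
  have hfejer (z : H) (hz : G z = 0) (k : ℕ) :
      ‖x (k + 1) - z‖ ^ 2 + η * (2 * θ - η) * ‖G (x k)‖ ^ 2 ≤ ‖x k - z‖ ^ 2 :=
    hx k ▸ hG.norm_sub_sq_add_le hη.le hz
  have hnorm (z : H) (hz : G z = 0) : ∃ l, Tendsto (fun k => ‖x k - z‖) atTop (𝓝 l) := by
    have hanti : Antitone fun k => ‖x k - z‖ := antitone_nat_of_succ_le fun k =>
      (pow_le_pow_iff_left₀ (norm_nonneg _) (norm_nonneg _) two_ne_zero).1
        (by nlinarith [hfejer z hz k])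
    exact ⟨_, tendsto_atTop_ciInf hanti ⟨0, by rintro _ ⟨k, rfl⟩; exact norm_nonneg _⟩⟩
  have hGx : Tendsto (fun k => G (x k)) atTop (𝓝 0) := by
    obtain ⟨z, hz⟩ := hzer
    obtain ⟨l, hl⟩ := hnorm z hz
    have hdiff : Tendsto (fun k => (‖x k - z‖ ^ 2 - ‖x (k + 1) - z‖ ^ 2) / (η * (2 * θ - η)))
        atTop (𝓝 0) := by
      simpa using ((hl.pow 2).sub ((hl.comp (tendsto_add_atTop_nat 1)).pow 2)).div_const _
    have hsq : Tendsto (fun k => ‖G (x k)‖ ^ 2) atTop (𝓝 0) :=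
      squeeze_zero (fun k => sq_nonneg _)
        (fun k => by rw [le_div_iff₀ hρ]; linarith [hfejer z hz k]) hdiff
    rw [tendsto_zero_iff_norm_tendsto_zero]
    simpa [Real.sqrt_sq (norm_nonneg _)] using hsq.sqrt
  obtain ⟨a, ha, hxa⟩ := exists_weakTendsto_of_tendsto_norm_sub (F := {z | G z = 0}) hzer hnorm
    fun ns hns b hb => hG.eq_zero_of_weakTendsto (by linarith) hb (hGx.comp hns)
  exact ⟨a, ha, hxa, hGx⟩

end Cocoercive

theorem IsComonotone.gap_add_gap_nonneg_of_weakTendsto (hA : IsComonotone A α)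
    (hB : IsComonotone B β) (hαβ : 0 ≤ α + β) {p u q v : ℕ → H} {p' u' : H}
    (hu : ∀ k, u k ∈ A (p k)) (hv : ∀ k, v k ∈ B (q k)) (hp : WeakTendsto p p')
    (hu' : WeakTendsto u u') (hqp : Tendsto (fun k => q k - p k) atTop (𝓝 0))
    (huv : Tendsto (fun k => u k + v k) atTop (𝓝 0)) {y a y' b : H} (ha : a ∈ A y)
    (hb : b ∈ B y') :
    0 ≤ comonotoneGap α p' u' y a + comonotoneGap β p' (-u') y' b := by
  set Ψ := comonotoneGap α p' u' y a + comonotoneGap β p' (-u') y' b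
  have hv' : WeakTendsto v (-u') := by
    simpa using (WeakTendsto.of_tendsto huv).sub hu'
  have t₁ := hp.tendsto_inner_sub (-(a + b))
  have t₂ := hu'.tendsto_inner_sub (y' - y + (2 * α) • a - (2 * β) • b - (2 * (α + β)) • u')
  have t₃ := (hv'.sub (.const b)).tendsto_inner_of_tendsto_zero hqp
  have t₄ := (hp.sub (.const y')).tendsto_inner_of_tendsto_zero huv
  have t₅ := ((hv'.sub hu').sub (.const ((2 : ℝ) • b))).tendsto_inner_of_tendsto_zero huv
  have hlim := (((((tendsto_const_nhds (x := Ψ)).add t₁).add t₂).add t₃).add t₄).sub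
    (t₅.const_mul β)
  rw [add_zero, add_zero, add_zero, add_zero, mul_zero, sub_zero] at hlim
  refine ge_of_tendsto' hlim fun k => ?_
  rw [← comonotoneGap_add_eq]
  have h₁ := hA _ _ _ _ (hu k) ha
  have h₂ := hB _ _ _ _ (hv k) hb
  simp only [comonotoneGap]
  linarith [mul_nonneg hαβ (sq_nonneg ‖u k - u'‖)]

theorem IsMaxComonotone.mem_of_weakTendsto (hA : IsMaxComonotone A α) (hB : IsComonotone B β)
    (hJ : IsResolvent J B δ) (hδβ : 0 < δ + β) (hαβ : 0 ≤ α + β) {p u q v : ℕ → H} {p' u' : H}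
    (hu : ∀ k, u k ∈ A (p k)) (hv : ∀ k, v k ∈ B (q k)) (hp : WeakTendsto p p')
    (hu' : WeakTendsto u u') (hqp : Tendsto (fun k => q k - p k) atTop (𝓝 0))
    (huv : Tendsto (fun k => u k + v k) atTop (𝓝 0)) : u' ∈ A p' :=
  hA.mem_of_gap_add_gap_nonneg hJ hδβ fun _ _ _ _ ha hb =>
    hA.1.gap_add_gap_nonneg_of_weakTendsto hB hαβ hu hv hp hu' hqp huv ha hb

theorem weakTendsto_resolvent_of_aDRResidual (hA : IsMaxComonotone A α)
    (hB : IsComonotone B β) (hJ₁ : IsResolvent J₁ A γ) (hJ₂ : IsResolvent J₂ B δ)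
    (hγ : γ ≠ 0) (hδ : δ ≠ 0) (hγα : 0 < γ + α) (hδβ : 0 < δ + β) (hαβ : 0 ≤ α + β)
    {x : ℕ → H} {a : H} (hx : WeakTendsto x a)
    (hG : Tendsto (fun k => aDRResidual J₁ J₂ γ δ (x k)) atTop (𝓝 0)) :
    WeakTendsto (fun k => J₁ (x k)) (J₁ a) := by
  set w := fun k => x k - (γ + δ) • yosida J₁ γ (x k)
  obtain ⟨C, hC⟩ := hx.exists_norm_le
  obtain ⟨Cu, hCu⟩ := (hJ₁.cocoercive_yosida hA.1 hγ).exists_norm_comp_le hγα hC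
  have hp (k : ℕ) : ‖J₁ (x k)‖ ≤ C + ‖γ‖ * Cu := by
    rw [← sub_smul_yosida J₁ hγ]
    exact (norm_sub_le _ _).trans (add_le_add (hC k) (by rw [norm_smul]; gcongr; exact hCu k))
  have hqp : Tendsto (fun k => J₂ (w k) - J₁ (x k)) atTop (𝓝 0) := by
    have hid (k : ℕ) : J₂ (w k) - J₁ (x k) = -δ • aDRResidual J₁ J₂ γ δ (x k) := by
      rw [← sub_smul_yosida J₂ hδ, ← sub_smul_yosida J₁ hγ, aDRResidual]
      module
    simpa only [hid, smul_zero] using hG.const_smul (-δ)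
  refine WeakTendsto.of_forall_subseq hp fun ns hns p' hp' => ?_
  have hu' : WeakTendsto (fun k => yosida J₁ γ (x (ns k))) (γ⁻¹ • (a - p')) :=
    ((hx.comp hns).sub hp').const_smul γ⁻¹
  have hmem := hA.mem_of_weakTendsto hB hJ₂ hδβ hαβ (fun k => hJ₁.yosida_mem hγ (x (ns k)))
    (fun k => hJ₂.yosida_mem hδ (w (ns k))) hp' hu' (hqp.comp hns) (hG.comp hns)
  rw [← hJ₁.apply_add_smul hA.1 hγα hmem, smul_inv_smul₀ hγ, add_sub_cancel]

end Complete

end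

theorem aDR_shadow_weak_convergence_comonotone_general {H : Type*} [NormedAddCommGroup H]
    [InnerProductSpace ℝ H] [CompleteSpace H]
    (A B : H → Set H) (α β : ℝ)
    (hA : ∀ x u y v, u ∈ A x → v ∈ A y → ⟪x - y, u - v⟫_ℝ ≥ α * ‖u - v‖ ^ 2)
    (hAmax : ∀ A' : H → Set H,
      (∀ x u y v, u ∈ A' x → v ∈ A' y → ⟪x - y, u - v⟫_ℝ ≥ α * ‖u - v‖ ^ 2) →
      (∀ x, A x ⊆ A' x) → ∀ x, A' x = A x)
    (hB : ∀ x u y v, u ∈ B x → v ∈ B y → ⟪x - y, u - v⟫_ℝ ≥ β * ‖u - v‖ ^ 2)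
    (hαβ : 0 ≤ α + β)
    (hzer : ∃ w : H, (0 : H) ∈ A w + B w)
    (γ δ lam mu κ : ℝ) (hγ : 0 < γ) (hδ : 0 < δ)
    (hlam : lam = 1 + δ / γ) (hmu : mu = 1 + γ / δ)
    (hcond : γ + δ ≤ min (2 * (γ + α)) (2 * (δ + β)))
    (hκ0 : 0 < κ)
    (hκ1 : α + β = 0 → κ < 1)
    (hκ2 : 0 < α + β →
      κ < (4 * (γ + α) * (δ + β) - (γ + δ) ^ 2) / (2 * (γ + δ) * (α + β)))
    (J₁ J₂ R₁ R₂ T : H → H)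
    (hJ₁ : ∀ z, z - J₁ z ∈ γ • A (J₁ z))
    (hJ₂ : ∀ z, z - J₂ z ∈ δ • B (J₂ z))
    (hR₁ : ∀ z, R₁ z = (1 - lam) • z + lam • J₁ z)
    (hR₂ : ∀ z, R₂ z = (1 - mu) • z + mu • J₂ z)
    (hT : ∀ z, T z = (1 - κ) • z + κ • R₂ (R₁ z))
    (x : ℕ → H) (hx : ∀ k, x (k + 1) = T (x k)) :
    ∃ xs : H, xs = T xs ∧
      (∀ u : H, Filter.Tendsto (fun k => ⟪x k, u⟫_ℝ) Filter.atTop (nhds ⟪xs, u⟫_ℝ)) ∧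
      (∀ u : H,
        Filter.Tendsto (fun k => ⟪J₁ (x k), u⟫_ℝ) Filter.atTop (nhds ⟪J₁ xs, u⟫_ℝ)) ∧
      (0 : H) ∈ A (J₁ xs) + B (J₁ xs) := by
  obtain ⟨θ, hκθ, hθα, hθβ, hθ⟩ := exists_cocoercivity_constant (by positivity) hαβ
    (hcond.trans (min_le_left _ _)) (hcond.trans (min_le_right _ _)) hκ1 hκ2
  have hθ0 : 0 < θ := by linarith [mul_pos hκ0 (add_pos hγ hδ)]
  set G := aDRResidual J₁ J₂ γ δ
  have hG : Cocoercive G θ := cocoercive_aDRResidual hA hB hJ₁ hJ₂ hγ.ne' hδ.ne' hθα hθβ hθ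
  have hTG (z : H) : T z = z - (κ * (γ + δ)) • G z := by
    rw [hT, hR₂, hR₁, hlam, hmu, relaxed_resolvent_eq J₁ hγ.ne', relaxed_resolvent_eq J₂ hδ.ne']
    simp only [G, aDRResidual]
    module
  obtain ⟨xs, hxs, hxw, hGx⟩ := hG.exists_weakTendsto_zero (by positivity) hκθ
    (fun k => (hx k).trans (hTG _))
    (exists_aDRResidual_eq_zero hA hB hJ₁ hJ₂ hγ.ne' hδ.ne' (by linarith) (by linarith) hzer)
  refine ⟨xs, by rw [hTG, hxs, smul_zero, sub_zero], hxw, ?_,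
    mem_add_of_aDRResidual_eq_zero hJ₁ hJ₂ hγ.ne' hδ.ne' hxs⟩
  exact weakTendsto_resolvent_of_aDRResidual ⟨hA, hAmax⟩ hB hJ₁ hJ₂ hγ.ne' hδ.ne'
    (by linarith) (by linarith) hαβ hxw hGx

/-- Weak convergence of the shadow sequence of the adaptive Douglas–Rachford
algorithm for maximally `α`-comonotone `A` and maximally `β`-comonotone `B`. -/
theorem aDR_shadow_weak_convergence_comonotone {H : Type*} [NormedAddCommGroup H]
    [InnerProductSpace ℝ H] [CompleteSpace H]
    (A B : H → Set H) (α β : ℝ)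
    (hA : ∀ x u y v, u ∈ A x → v ∈ A y → ⟪x - y, u - v⟫_ℝ ≥ α * ‖u - v‖ ^ 2)
    (hAmax : ∀ A' : H → Set H,
      (∀ x u y v, u ∈ A' x → v ∈ A' y → ⟪x - y, u - v⟫_ℝ ≥ α * ‖u - v‖ ^ 2) →
      (∀ x, A x ⊆ A' x) → ∀ x, A' x = A x)
    (hB : ∀ x u y v, u ∈ B x → v ∈ B y → ⟪x - y, u - v⟫_ℝ ≥ β * ‖u - v‖ ^ 2)
    (hBmax : ∀ B' : H → Set H,
      (∀ x u y v, u ∈ B' x → v ∈ B' y → ⟪x - y, u - v⟫_ℝ ≥ β * ‖u - v‖ ^ 2) →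
      (∀ x, B x ⊆ B' x) → ∀ x, B' x = B x)
    (hαβ : 0 ≤ α + β)
    (hzer : ∃ w : H, (0 : H) ∈ A w + B w)
    (γ δ lam mu κ : ℝ) (hγ : 0 < γ) (hδ : 0 < δ)
    (hlam : lam = 1 + δ / γ) (hmu : mu = 1 + γ / δ)
    (hcond : γ + δ ≤ min (2 * (γ + α)) (2 * (δ + β)))
    (hκ0 : 0 < κ)
    (hκ1 : α + β = 0 → κ < 1)
    (hκ2 : 0 < α + β →
      κ < (4 * (γ + α) * (δ + β) - (γ + δ) ^ 2) / (2 * (γ + δ) * (α + β)))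
    (J₁ J₂ R₁ R₂ T : H → H)
    (hJ₁ : ∀ z, z - J₁ z ∈ γ • A (J₁ z))
    (hJ₂ : ∀ z, z - J₂ z ∈ δ • B (J₂ z))
    (hR₁ : ∀ z, R₁ z = (1 - lam) • z + lam • J₁ z)
    (hR₂ : ∀ z, R₂ z = (1 - mu) • z + mu • J₂ z)
    (hT : ∀ z, T z = (1 - κ) • z + κ • R₂ (R₁ z))
    (x : ℕ → H) (hx : ∀ k, x (k + 1) = T (x k)) :
    ∃ xs : H, xs = T xs ∧
      (∀ u : H, Filter.Tendsto (fun k => ⟪x k, u⟫_ℝ) Filter.atTop (nhds ⟪xs, u⟫_ℝ)) ∧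
      (∀ u : H,
        Filter.Tendsto (fun k => ⟪J₁ (x k), u⟫_ℝ) Filter.atTop (nhds ⟪J₁ xs, u⟫_ℝ)) ∧
      (0 : H) ∈ A (J₁ xs) + B (J₁ xs) :=
  aDR_shadow_weak_convergence_comonotone_general A B α β hA hAmax hB hαβ hzer γ δ lam mu κ hγ hδ
    hlam hmu hcond hκ0 hκ1 hκ2 J₁ J₂ R₁ R₂ T hJ₁ hJ₂ hR₁ hR₂ hT x hx
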